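/- arXiv:2207.02636 — 2 statements merged into one kernel-verified Lean document; each statement's English description precedes it below -/
import Mathlib

section
/- Let q be a continuously differentiable probability density on ℝ^d with ‖x‖^{d−1} q(x) → 0 as ‖x‖ → ∞ and ∫ ‖∇ log q‖ dq < ∞, and let p be a probability density with q absolutely continuous with respect to p. Then for any continuously differentiable h : ℝ^d → ℝ^d with h and its first derivatives bounded, ∫ (q(x)/p(x)) [∇·h(x) + ⟨h(x), ∇ log q(x)⟩] p(x) dx = 0. -/
open MeasureTheory Filter EuclideanSpace

/-!
Since `q` is absolutely continuous with respect to `p`, the weight `p` cancels and the integrand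
is `q (∇·h) + ⟨∇q, h⟩ = ∑ᵢ ∂ᵢ (q hᵢ)`, with `∇q = q ∇log q` also where `q` vanishes (there `q`
has a minimum). Each `q hᵢ` is integrable because `q` is and `h` is bounded, and its partial
derivative `q ∂ᵢhᵢ + hᵢ ∂ᵢq` is integrable because `∂h` is bounded and `‖∇q‖ = ‖∇log q‖ q`.
The integral over the whole space of a partial derivative of an integrable function with
integrable partial derivative vanishes, which is integration by parts against the constant `1`.
-/

section WholeSpace

variable {E : Type*} [NormedAddCommGroup E] [NormedSpace ℝ E]
  [MeasurableSpace E] [BorelSpace E] {μ : Measure E}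

theorem MeasureTheory.Integrable.fderiv_apply {f : E → ℝ}
    (hf' : Integrable (fun x => ‖fderiv ℝ f x‖) μ) (v : E) :
    Integrable (fun x => fderiv ℝ f x v) μ :=
  (hf'.mul_const ‖v‖).mono' (measurable_fderiv_apply_const ℝ f v).aestronglyMeasurable
    (Eventually.of_forall fun x => (fderiv ℝ f x).le_opNorm v)

theorem integrable_fderiv_mul_apply_of_bounded {f g : E → ℝ} {v : E} {C C' : ℝ}
    (hf : Differentiable ℝ f) (hg : Differentiable ℝ g)
    (hf_int : Integrable f μ) (hf'_int : Integrable (fun x => fderiv ℝ f x v) μ)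
    (hg_bdd : ∀ x, ‖g x‖ ≤ C) (hg'_bdd : ∀ x, ‖fderiv ℝ g x v‖ ≤ C') :
    Integrable (fun x => fderiv ℝ (fun y => f y * g y) x v) μ := by
  have hfg' : Integrable (fun x => f x * fderiv ℝ g x v) μ :=
    hf_int.mul_bdd (measurable_fderiv_apply_const ℝ g v).aestronglyMeasurable
      (Eventually.of_forall hg'_bdd)
  have hf'g : Integrable (fun x => fderiv ℝ f x v * g x) μ :=
    hf'_int.mul_bdd hg.continuous.aestronglyMeasurable (Eventually.of_forall hg_bdd)
  refine (hfg'.add hf'g).congr (Eventually.of_forall fun x => ?_)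
  simp [fderiv_fun_mul (hf x) (hg x), mul_comm]

theorem integral_fderiv_apply_eq_zero [FiniteDimensional ℝ E] [μ.IsAddHaarMeasure]
    {f : E → ℝ} {v : E} (hf : Differentiable ℝ f) (hf_int : Integrable f μ)
    (hf'_int : Integrable (fun x => fderiv ℝ f x v) μ) :
    ∫ x, fderiv ℝ f x v ∂μ = 0 := by
  simpa using integral_mul_fderiv_eq_neg_fderiv_mul_of_integrable (μ := μ)
    (f := fun _ => (1 : ℝ)) (g := f) (v := v) (by simp) (by simpa using hf'_int)
    (by simpa using hf_int) (fun x _ => differentiableAt_const 1) (fun x _ => hf x)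

theorem integral_fderiv_mul_apply_eq_zero_of_bounded [FiniteDimensional ℝ E]
    [μ.IsAddHaarMeasure] {f g : E → ℝ} {v : E} {C C' : ℝ}
    (hf : Differentiable ℝ f) (hg : Differentiable ℝ g)
    (hf_int : Integrable f μ) (hf'_int : Integrable (fun x => fderiv ℝ f x v) μ)
    (hg_bdd : ∀ x, ‖g x‖ ≤ C) (hg'_bdd : ∀ x, ‖fderiv ℝ g x v‖ ≤ C') :
    ∫ x, fderiv ℝ (fun y => f y * g y) x v ∂μ = 0 :=
  integral_fderiv_apply_eq_zero (hf.mul hg)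
    (hf_int.mul_bdd hg.continuous.aestronglyMeasurable (Eventually.of_forall hg_bdd))
    (integrable_fderiv_mul_apply_of_bounded hf hg hf_int hf'_int hg_bdd hg'_bdd)

end WholeSpace

section Score

variable {E : Type*} [NormedAddCommGroup E] [NormedSpace ℝ E]

theorem fderiv_eq_zero_of_nonneg_of_eq_zero {f : E → ℝ} (hf : ∀ y, 0 ≤ f y) {x : E}
    (hx : f x = 0) : fderiv ℝ f x = 0 :=
  IsLocalMin.fderiv_eq_zero (Eventually.of_forall fun y => hx ▸ hf y)

theorem smul_fderiv_log_of_nonneg {f : E → ℝ} (hf : ∀ y, 0 ≤ f y) {x : E}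
    (hfx : DifferentiableAt ℝ f x) :
    f x • fderiv ℝ (fun z => Real.log (f z)) x = fderiv ℝ f x := by
  rcases (hf x).eq_or_lt with hx | hx
  · rw [← hx, zero_smul, fderiv_eq_zero_of_nonneg_of_eq_zero hf hx.symm]
  · rw [fderiv.log hfx hx.ne', smul_inv_smul₀ hx.ne']

variable {F : Type*} [NormedAddCommGroup F] [InnerProductSpace ℝ F] [CompleteSpace F]

theorem norm_fderiv_eq_norm_gradient_log_mul {f : F → ℝ} (hf : ∀ y, 0 ≤ f y) {x : F}
    (hfx : DifferentiableAt ℝ f x) :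
    ‖fderiv ℝ f x‖ = ‖gradient (fun z => Real.log (f z)) x‖ * f x := by
  rw [← smul_fderiv_log_of_nonneg hf hfx, norm_smul, Real.norm_of_nonneg (hf x), mul_comm,
    gradient, LinearIsometryEquiv.norm_map]

theorem inner_gradient_log_mul {f : F → ℝ} (hf : ∀ y, 0 ≤ f y) {x : F}
    (hfx : DifferentiableAt ℝ f x) (v : F) :
    inner ℝ v (gradient (fun z => Real.log (f z)) x) * f x = fderiv ℝ f x v := by
  rw [← smul_fderiv_log_of_nonneg hf hfx, real_inner_comm, inner_gradient_left]
  simp [mul_comm]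

end Score

section Coordinates

variable {d : ℕ}

theorem ContinuousLinearMap.apply_eq_sum_single (L : EuclideanSpace ℝ (Fin d) →L[ℝ] ℝ)
    (v : EuclideanSpace ℝ (Fin d)) : L v = ∑ i, L (EuclideanSpace.single i 1) * v i := by
  conv_lhs => rw [← (EuclideanSpace.basisFun (Fin d) ℝ).sum_repr v]
  simp [mul_comm]

theorem fderiv_coord_apply {h : EuclideanSpace ℝ (Fin d) → EuclideanSpace ℝ (Fin d)}
    {x : EuclideanSpace ℝ (Fin d)} (hx : DifferentiableAt ℝ h x) (i : Fin d)
    (v : EuclideanSpace ℝ (Fin d)) :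
    fderiv ℝ (fun z => h z i) x v = fderiv ℝ h x v i := by
  change fderiv ℝ (EuclideanSpace.proj i ∘ h) x v = _
  rw [((EuclideanSpace.proj i).hasFDerivAt.comp x hx.hasFDerivAt).fderiv]
  rfl

theorem norm_fderiv_coord_apply_le {h : EuclideanSpace ℝ (Fin d) → EuclideanSpace ℝ (Fin d)}
    {x : EuclideanSpace ℝ (Fin d)} (hx : DifferentiableAt ℝ h x) (i : Fin d)
    (v : EuclideanSpace ℝ (Fin d)) :
    ‖fderiv ℝ (fun z => h z i) x v‖ ≤ ‖fderiv ℝ h x‖ * ‖v‖ := by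
  rw [fderiv_coord_apply hx]
  exact (PiLp.norm_apply_le _ i).trans ((fderiv ℝ h x).le_opNorm v)

theorem mul_divergence_add_inner_gradient_log {q : EuclideanSpace ℝ (Fin d) → ℝ}
    {h : EuclideanSpace ℝ (Fin d) → EuclideanSpace ℝ (Fin d)} (hq : ∀ y, 0 ≤ q y)
    {x : EuclideanSpace ℝ (Fin d)} (hqx : DifferentiableAt ℝ q x) (hhx : DifferentiableAt ℝ h x) :
    q x * ((∑ i, fderiv ℝ (fun z => h z i) x (single i 1))
        + inner ℝ (h x) (gradient (fun z => Real.log (q z)) x))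
      = ∑ i, fderiv ℝ (fun z => q z * h z i) x (single i 1) := by
  rw [mul_add, mul_comm (q x) (inner ℝ _ _), inner_gradient_log_mul hq hqx,
    ContinuousLinearMap.apply_eq_sum_single, Finset.mul_sum, ← Finset.sum_add_distrib]
  refine Finset.sum_congr rfl fun i _ => ?_
  have hhix : DifferentiableAt ℝ (fun z => h z i) x :=
    (EuclideanSpace.proj (𝕜 := ℝ) i).differentiableAt.comp x hhx
  rw [fderiv_fun_mul hqx hhix]
  simp [mul_comm]

end Coordinates

theorem stmt_9_general (d : ℕ) (p q : EuclideanSpace ℝ (Fin d) → ℝ)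
    (hq_nonneg : ∀ x, 0 ≤ q x) (hq_int : ∫ x, q x = 1)
    (hq_smooth : ContDiff ℝ 1 q)
    (habs : ∀ x, p x = 0 → q x = 0)
    (hscore_int : Integrable
      (fun x => ‖gradient (fun z => Real.log (q z)) x‖ * q x))
    (h : EuclideanSpace ℝ (Fin d) → EuclideanSpace ℝ (Fin d))
    (hh_smooth : ContDiff ℝ 1 h)
    (hh_bdd : ∃ C, ∀ x, ‖h x‖ ≤ C)
    (hh_deriv_bdd : ∃ C, ∀ x, ‖fderiv ℝ h x‖ ≤ C) :
    ∫ x, (q x / p x) *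
        ((∑ i, fderiv ℝ (fun z => h z i) x (single i 1))
          + (inner ℝ (h x) (gradient (fun z => Real.log (q z)) x) : ℝ)) * p x = 0 := by
  obtain ⟨C, hC⟩ := hh_bdd
  obtain ⟨C', hC'⟩ := hh_deriv_bdd
  have hq_diff := hq_smooth.differentiable one_ne_zero
  have hh_diff := hh_smooth.differentiable one_ne_zero
  have hq_integrable : Integrable q := .of_integral_ne_zero (hq_int ▸ one_ne_zero)
  have hq'_int : Integrable (fun x => ‖fderiv ℝ q x‖) :=
    hscore_int.congr (Eventually.of_forall fun x =>
      (norm_fderiv_eq_norm_gradient_log_mul hq_nonneg (hq_diff x)).symm)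
  have hhi_diff (i : Fin d) : Differentiable ℝ (fun z => h z i) :=
    (EuclideanSpace.proj (𝕜 := ℝ) i).differentiable.comp hh_diff
  have hhi_bdd (i : Fin d) (x : EuclideanSpace ℝ (Fin d)) : ‖h x i‖ ≤ C :=
    (PiLp.norm_apply_le (h x) i).trans (hC x)
  have hhi'_bdd (i : Fin d) (x : EuclideanSpace ℝ (Fin d)) :
      ‖fderiv ℝ (fun z => h z i) x (single i 1)‖ ≤ C' := by
    simpa using (norm_fderiv_coord_apply_le (hh_diff x) i (single i 1)).trans
      (mul_le_mul_of_nonneg_right (hC' x) (norm_nonneg _))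
  have hpointwise (x : EuclideanSpace ℝ (Fin d)) :
      (q x / p x) * ((∑ i, fderiv ℝ (fun z => h z i) x (single i 1))
          + (inner ℝ (h x) (gradient (fun z => Real.log (q z)) x) : ℝ)) * p x
        = ∑ i, fderiv ℝ (fun z => q z * h z i) x (single i 1) := by
    rw [mul_right_comm, div_mul_cancel_of_imp (habs x)]
    exact mul_divergence_add_inner_gradient_log hq_nonneg (hq_diff x) (hh_diff x)
  rw [integral_congr_ae (Eventually.of_forall hpointwise), integral_finsetSum _ fun i _ =>
    integrable_fderiv_mul_apply_of_bounded hq_diff (hhi_diff i) hq_integrable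
      (hq'_int.fderiv_apply _) (hhi_bdd i) (hhi'_bdd i)]
  exact Finset.sum_eq_zero fun i _ => integral_fderiv_mul_apply_eq_zero_of_bounded hq_diff
    (hhi_diff i) hq_integrable (hq'_int.fderiv_apply _) (hhi_bdd i) (hhi'_bdd i)

theorem stmt_9 (d : ℕ) (p q : EuclideanSpace ℝ (Fin d) → ℝ)
    (hp_nonneg : ∀ x, 0 ≤ p x) (hp_int : ∫ x, p x = 1)
    (hq_nonneg : ∀ x, 0 ≤ q x) (hq_int : ∫ x, q x = 1)
    (hq_smooth : ContDiff ℝ 1 q)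
    (habs : ∀ x, p x = 0 → q x = 0)
    (hdecay : Tendsto (fun x : EuclideanSpace ℝ (Fin d) => ‖x‖ ^ (d - 1) * q x)
      (cocompact (EuclideanSpace ℝ (Fin d))) (nhds 0))
    (hscore_int : Integrable
      (fun x => ‖gradient (fun z => Real.log (q z)) x‖ * q x))
    (h : EuclideanSpace ℝ (Fin d) → EuclideanSpace ℝ (Fin d))
    (hh_smooth : ContDiff ℝ 1 h)
    (hh_bdd : ∃ C, ∀ x, ‖h x‖ ≤ C)
    (hh_deriv_bdd : ∃ C, ∀ x, ‖fderiv ℝ h x‖ ≤ C) :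
    ∫ x, (q x / p x) *
        ((∑ i, fderiv ℝ (fun z => h z i) x (single i 1))
          + (inner ℝ (h x) (gradient (fun z => Real.log (q z)) x) : ℝ)) * p x = 0 :=
  stmt_9_general d p q hq_nonneg hq_int hq_smooth habs hscore_int h hh_smooth hh_bdd hh_deriv_bdd
end

section
/- Let p be a continuous probability density on ℝ^d, q a continuous positive probability density, and (π_n) a sequence of probability measures such that the reweighted measures π̄_n (with dπ̄_n ∝ (q/p) dπ_n, normalising constants Z_n = ∫ (q/p) dπ_n) converge weakly to q and Z_n are bounded away from 0. If π̄_n converges weakly to q and Z_n⁻¹ → 1, then π_n converges weakly to p. -/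
/-!
With w = q/p, the reweighted measures satisfy Z_n π̄_n = w π_n, so Z_n → 1 turns the hypothesis
into ∫ w h dπ_n → ∫ h q for bounded continuous h. As q/p need not be bounded below, g p/q need not
be bounded; test instead with h = g T_m, where T_m = min (p/q, m). Then w T_m takes values in
[0, 1], so ∫ g dπ_n is within ‖g‖ (1 - ∫ w T_m dπ_n) of ∫ g w T_m dπ_n; as n → ∞ these integrals
tend to ∫ g min (p, m q) and ∫ min (p, m q), which tend to ∫ g p and ∫ p = 1 as m → ∞ by dominated
convergence.
-/

open MeasureTheory Filter Topology

theorem tendsto_of_forall_abs_sub_le {ι κ : Type*} {l : Filter ι} {l' : Filter κ} [l'.NeBot]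
    {x : ι → ℝ} {L : ℝ} {y e : κ → ι → ℝ} {b E : κ → ℝ}
    (hy : ∀ m, Tendsto (y m) l (𝓝 (b m))) (hb : Tendsto b l' (𝓝 L))
    (he : ∀ m, Tendsto (e m) l (𝓝 (E m))) (hE : Tendsto E l' (𝓝 0))
    (hxy : ∀ m n, |x n - y m n| ≤ e m n) :
    Tendsto x l (𝓝 L) := by
  rw [Metric.tendsto_nhds]
  intro ε hε
  obtain ⟨m, hEm, hbm⟩ := ((hE.eventually (gt_mem_nhds (by positivity : 0 < ε / 3))).and
    (Metric.tendsto_nhds.1 hb (ε / 3) (by positivity))).exists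
  filter_upwards [(he m).eventually (gt_mem_nhds hEm),
    Metric.tendsto_nhds.1 (hy m) (ε / 3) (by positivity)] with n hen hyn
  rw [Real.dist_eq] at hbm hyn ⊢
  have := hxy m n
  rw [abs_lt] at hbm hyn ⊢; rw [abs_le] at this
  constructor <;> linarith

section

variable {X : Type*} [MeasurableSpace X]

theorem mul_integral_withDensity_ofReal_div {π : Measure X} {f : X → ℝ} (hf : Measurable f)
    (hf0 : ∀ x, 0 ≤ f x) {c : ℝ} (hc : 0 < c) (φ : X → ℝ) :
    c * ∫ x, φ x ∂π.withDensity (fun x => ENNReal.ofReal (f x / c)) = ∫ x, f x * φ x ∂π := by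
  rw [integral_withDensity_eq_integral_toReal_smul (hf.div_const c).ennreal_ofReal
    (ae_of_all _ fun _ => ENNReal.ofReal_lt_top), ← integral_const_mul]
  refine integral_congr_ae (ae_of_all _ fun x => ?_)
  dsimp only
  rw [ENNReal.toReal_ofReal (div_nonneg (hf0 x) hc.le), smul_eq_mul]
  field_simp

theorem tendsto_integral_mul_of_tendsto_integral_withDensity {π : ℕ → Measure X} {f : X → ℝ}
    (hf : Measurable f) (hf0 : ∀ x, 0 ≤ f x) {Z : ℕ → ℝ}
    (hZ : Tendsto (fun n => (Z n)⁻¹) atTop (𝓝 1)) {φ : X → ℝ} {L : ℝ}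
    (hφ : Tendsto (fun n => ∫ x, φ x ∂(π n).withDensity (fun x => ENNReal.ofReal (f x / Z n)))
      atTop (𝓝 L)) :
    Tendsto (fun n => ∫ x, f x * φ x ∂π n) atTop (𝓝 L) := by
  have hZ_one : Tendsto Z atTop (𝓝 1) := by simpa using hZ.inv₀ one_ne_zero
  have hZ_pos : ∀ᶠ n in atTop, 0 < Z n := hZ_one.eventually (lt_mem_nhds one_pos)
  refine ((hZ_one.mul hφ).congr' ?_).trans (by rw [one_mul])
  filter_upwards [hZ_pos] with n hn
  exact mul_integral_withDensity_ofReal_div hf hf0 hn φ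

theorem abs_integral_sub_integral_mul_le {π : Measure X} [IsProbabilityMeasure π]
    {g u : X → ℝ} {C : ℝ} (hg : AEStronglyMeasurable g π) (hgC : ∀ x, ‖g x‖ ≤ C)
    (hu : AEStronglyMeasurable u π) (hu01 : ∀ x, u x ∈ Set.Icc 0 1) :
    |∫ x, g x ∂π - ∫ x, g x * u x ∂π| ≤ C * (1 - ∫ x, u x ∂π) := by
  have hu_bdd : ∀ᵐ x ∂π, ‖u x‖ ≤ 1 :=
    ae_of_all _ fun x => abs_le.2 ⟨by linarith [(hu01 x).1], (hu01 x).2⟩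
  have hg_int : Integrable g π := .of_bound hg C (ae_of_all _ hgC)
  have hu_int : Integrable u π := .of_bound hu 1 hu_bdd
  calc |∫ x, g x ∂π - ∫ x, g x * u x ∂π|
      = ‖∫ x, g x * (1 - u x) ∂π‖ := by
        simp_rw [mul_one_sub, ← integral_sub hg_int (hg_int.mul_bdd hu hu_bdd), Real.norm_eq_abs]
    _ ≤ ∫ x, C * (1 - u x) ∂π := by
        refine norm_integral_le_of_norm_le (((integrable_const 1).sub hu_int).const_mul C)
          (ae_of_all _ fun x => ?_)
        rw [norm_mul, Real.norm_of_nonneg (sub_nonneg.2 (hu01 x).2)]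
        exact mul_le_mul_of_nonneg_right (hgC x) (sub_nonneg.2 (hu01 x).2)
    _ = C * (1 - ∫ x, u x ∂π) := by
        rw [integral_const_mul, integral_sub (integrable_const 1) hu_int]
        simp

theorem tendsto_integral_of_tendsto_integral_mul {π : ℕ → Measure X}
    [∀ n, IsProbabilityMeasure (π n)] {g : X → ℝ} {C : ℝ} (hg : Measurable g)
    (hgC : ∀ x, ‖g x‖ ≤ C) {u : ℕ → X → ℝ} (hu : ∀ m, Measurable (u m))
    (hu01 : ∀ m x, u m x ∈ Set.Icc 0 1) {a b : ℕ → ℝ} {L : ℝ}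
    (ha : ∀ m, Tendsto (fun n => ∫ x, u m x ∂π n) atTop (𝓝 (a m)))
    (ha1 : Tendsto a atTop (𝓝 1))
    (hb : ∀ m, Tendsto (fun n => ∫ x, g x * u m x ∂π n) atTop (𝓝 (b m)))
    (hbL : Tendsto b atTop (𝓝 L)) :
    Tendsto (fun n => ∫ x, g x ∂π n) atTop (𝓝 L) :=
  tendsto_of_forall_abs_sub_le hb hbL (fun m => ((ha m).const_sub 1).const_mul C)
    (by simpa using (ha1.const_sub 1).const_mul C)
    fun m _ => abs_integral_sub_integral_mul_le hg.aestronglyMeasurable hgC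
      (hu m).aestronglyMeasurable (hu01 m)

theorem tendsto_integral_mul_min_natCast_mul {ν : Measure X} {g p q : X → ℝ} {C : ℝ}
    (hg : AEStronglyMeasurable g ν) (hgC : ∀ x, ‖g x‖ ≤ C) (hp : Integrable p ν)
    (hp0 : ∀ x, 0 ≤ p x) (hq : AEStronglyMeasurable q ν) (hq0 : ∀ x, 0 < q x) :
    Tendsto (fun m : ℕ => ∫ x, g x * min (p x) (m * q x) ∂ν) atTop (𝓝 (∫ x, g x * p x ∂ν)) := by
  have hmin0 : ∀ (m : ℕ) x, 0 ≤ min (p x) (m * q x) := fun m x =>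
    le_min (hp0 x) (mul_nonneg m.cast_nonneg (hq0 x).le)
  refine tendsto_integral_of_dominated_convergence (fun x => C * p x)
    (fun m => hg.mul (hp.1.inf (hq.const_mul _))) (hp.const_mul C)
    (fun m => ae_of_all _ fun x => ?_) (ae_of_all _ fun x => ?_)
  · rw [norm_mul, Real.norm_of_nonneg (hmin0 m x)]
    exact mul_le_mul (hgC x) (min_le_left _ _) (hmin0 m x) ((norm_nonneg _).trans (hgC x))
  · refine tendsto_const_nhds.congr' ?_
    filter_upwards [(tendsto_natCast_atTop_atTop.atTop_mul_const (hq0 x)).eventually_ge_atTop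
      (p x)] with m hm
    rw [min_eq_left hm]

end

section

variable {X : Type*} [TopologicalSpace X] {p q : X → ℝ} (hp : Continuous p) (hq : Continuous q)
  (hp0 : ∀ x, 0 ≤ p x) (hq0 : ∀ x, 0 < q x)

noncomputable def truncRatio (m : ℕ) : BoundedContinuousFunction X ℝ :=
  .ofNormedAddCommGroup (fun x => min (p x / q x) m)
    ((hp.div hq fun x => (hq0 x).ne').min continuous_const) m fun x => by
      rw [Real.norm_of_nonneg (le_min (div_nonneg (hp0 x) (hq0 x).le) m.cast_nonneg)]
      exact min_le_right _ _

theorem truncRatio_apply (m : ℕ) (x : X) :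
    truncRatio hp hq hp0 hq0 m x = min (p x / q x) m := rfl

theorem truncRatio_mul (m : ℕ) (x : X) :
    truncRatio hp hq hp0 hq0 m x * q x = min (p x) (m * q x) := by
  rw [truncRatio_apply, min_mul_of_nonneg _ _ (hq0 x).le, div_mul_cancel₀ _ (hq0 x).ne']

theorem div_mul_truncRatio_mem_Icc (m : ℕ) (x : X) :
    q x / p x * truncRatio hp hq hp0 hq0 m x ∈ Set.Icc 0 1 := by
  rw [truncRatio_apply]
  have hqp : 0 ≤ q x / p x := div_nonneg (hq0 x).le (hp0 x)
  refine ⟨mul_nonneg hqp (le_min (div_nonneg (hp0 x) (hq0 x).le) m.cast_nonneg), ?_⟩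
  rcases (hp0 x).eq_or_lt with hpx | hpx
  · simp [← hpx]
  · calc q x / p x * min (p x / q x) m ≤ q x / p x * (p x / q x) :=
          mul_le_mul_of_nonneg_left (min_le_left _ _) hqp
      _ = 1 := by field_simp [(hq0 x).ne']

end

theorem stmt_13_general (d : ℕ) (p q : EuclideanSpace ℝ (Fin d) → ℝ)
    (hp_cont : Continuous p) (hp_nonneg : ∀ x, 0 ≤ p x) (hp_int : ∫ x, p x = 1)
    (hq_cont : Continuous q) (hq_pos : ∀ x, 0 < q x)
    (π : ℕ → Measure (EuclideanSpace ℝ (Fin d))) (hπ : ∀ n, IsProbabilityMeasure (π n))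
    (Z : ℕ → ℝ)
    (hZ_lim : Tendsto (fun n => (Z n)⁻¹) atTop (nhds 1))
    (hweak : ∀ g : BoundedContinuousFunction (EuclideanSpace ℝ (Fin d)) ℝ,
      Tendsto (fun n => ∫ x, g x ∂((π n).withDensity
          (fun x => ENNReal.ofReal ((q x / p x) / Z n))))
        atTop (nhds (∫ x, g x * q x))) :
    ∀ g : BoundedContinuousFunction (EuclideanSpace ℝ (Fin d)) ℝ,
      Tendsto (fun n => ∫ x, g x ∂(π n)) atTop (nhds (∫ x, g x * p x)) := by
  intro g
  set T := truncRatio hp_cont hq_cont hp_nonneg hq_pos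
  have hw : Measurable fun x => q x / p x := hq_cont.measurable.div hp_cont.measurable
  have hw0 : ∀ x, 0 ≤ q x / p x := fun x => div_nonneg (hq_pos x).le (hp_nonneg x)
  have hp_integrable : Integrable p := .of_integral_ne_zero (by simp [hp_int])
  have hmin : ∀ {h : EuclideanSpace ℝ (Fin d) → ℝ} {C : ℝ}, Continuous h → (∀ x, ‖h x‖ ≤ C) →
      Tendsto (fun m : ℕ => ∫ x, h x * (T m x * q x)) atTop (𝓝 (∫ x, h x * p x)) :=
    fun hh hC => by
      simpa only [T, truncRatio_mul] using tendsto_integral_mul_min_natCast_mul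
        hh.aestronglyMeasurable hC hp_integrable hp_nonneg hq_cont.aestronglyMeasurable hq_pos
  refine tendsto_integral_of_tendsto_integral_mul (u := fun m x => q x / p x * T m x)
    (b := fun m => ∫ x, (g * T m) x * q x)
    g.continuous.measurable g.norm_coe_le_norm (fun m => hw.mul (T m).continuous.measurable)
    (div_mul_truncRatio_mem_Icc hp_cont hq_cont hp_nonneg hq_pos)
    (fun m => tendsto_integral_mul_of_tendsto_integral_withDensity hw hw0 hZ_lim (hweak (T m)))
    ?_ (fun m => ?_) ?_
  · simpa [hp_int] using hmin continuous_const (fun _ => (norm_one (α := ℝ)).le)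
  · simpa only [BoundedContinuousFunction.coe_mul, Pi.mul_apply, mul_left_comm (q _ / p _)]
      using tendsto_integral_mul_of_tendsto_integral_withDensity hw hw0 hZ_lim (hweak (g * T m))
  · simpa only [BoundedContinuousFunction.coe_mul, Pi.mul_apply, mul_assoc]
      using hmin g.continuous g.norm_coe_le_norm

theorem stmt_13 (d : ℕ) (p q : EuclideanSpace ℝ (Fin d) → ℝ)
    (hp_cont : Continuous p) (hp_nonneg : ∀ x, 0 ≤ p x) (hp_int : ∫ x, p x = 1)
    (hq_cont : Continuous q) (hq_pos : ∀ x, 0 < q x) (hq_int : ∫ x, q x = 1)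
    (π : ℕ → Measure (EuclideanSpace ℝ (Fin d))) (hπ : ∀ n, IsProbabilityMeasure (π n))
    (Z : ℕ → ℝ) (hZ : ∀ n, Z n = ∫ x, q x / p x ∂(π n))
    (hZ_bdd : ∃ c > 0, ∀ n, c ≤ Z n)
    (hZ_lim : Tendsto (fun n => (Z n)⁻¹) atTop (nhds 1))
    (hweak : ∀ g : BoundedContinuousFunction (EuclideanSpace ℝ (Fin d)) ℝ,
      Tendsto (fun n => ∫ x, g x ∂((π n).withDensity
          (fun x => ENNReal.ofReal ((q x / p x) / Z n))))
        atTop (nhds (∫ x, g x * q x))) :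
    ∀ g : BoundedContinuousFunction (EuclideanSpace ℝ (Fin d)) ℝ,
      Tendsto (fun n => ∫ x, g x ∂(π n)) atTop (nhds (∫ x, g x * p x)) :=
  stmt_13_general d p q hp_cont hp_nonneg hp_int hq_cont hq_pos π hπ Z hZ_lim hweak
end
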